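/- Let H1, H2 be real separable Hilbert spaces, u ∈ H1 and v ∈ H2 unit vectors. Define T ⊆ B2(H1;H2) (the Hilbert–Schmidt operators) as T = { u ⊗ b + a ⊗ v : a ∈ H1, b ∈ H2 }. Then for every Hilbert–Schmidt operator H, the orthogonal projection of H onto T is P_T(H) = u ⊗ (Hu) + (H*v) ⊗ v − ⟨H, u ⊗ v⟩_{HS} (u ⊗ v), and the orthogonal projection onto the orthogonal complement of T is P_{T⊥}(H) = P_{v⊥} ∘ H ∘ P_{u⊥}, where P_{u⊥}, P_{v⊥} are the orthogonal projections onto the orthogonal complements of span{u} and span{v}. -/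

import Mathlib

open scoped RealInnerProductSpace

/-- The rank-one operator `u ⊗ v : a ↦ ⟪u, a⟫ • v`. -/
noncomputable def rankOne {H1 H2 : Type*} [NormedAddCommGroup H1] [InnerProductSpace ℝ H1]
    [NormedAddCommGroup H2] [InnerProductSpace ℝ H2] (u : H1) (v : H2) : H1 →L[ℝ] H2 :=
  (innerSL ℝ u).smulRight v

/-- The Hilbert–Schmidt inner product `⟨A, B⟩ = Σ_i ⟪A e_i, B e_i⟫` with respect to an
orthonormal basis `b` of the source space. -/
noncomputable def hsInner {H1 H2 ι : Type*} [NormedAddCommGroup H1] [InnerProductSpace ℝ H1]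
    [NormedAddCommGroup H2] [InnerProductSpace ℝ H2]
    (b : HilbertBasis ι ℝ H1) (A B : H1 →L[ℝ] H2) : ℝ :=
  ∑' i, ⟪A (b i), B (b i)⟫

/-- The orthogonal projection onto the orthogonal complement of `span {u}`, for `‖u‖ = 1`:
`x ↦ x - ⟪u, x⟫ • u`. -/
noncomputable def perpProj {E : Type*} [NormedAddCommGroup E] [InnerProductSpace ℝ E]
    (u : E) : E →L[ℝ] E :=
  ContinuousLinearMap.id ℝ E - rankOne u u

/- Writing `Q = P_{v⊥} ∘ H ∘ P_{u⊥}`, expanding the two projections gives `H = P + Q`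
for the stated `P`, which visibly lies in `T`. Since `Q u = 0` and `Q` takes values in `v⊥`,
`Q` is Hilbert–Schmidt orthogonal to `T`: against `a ⊗ v` every term of the series vanishes,
and against `u ⊗ c` the series sums to `⟪Q u, c⟫ = 0` by expanding `u` in the Hilbert basis. -/

section

variable {H1 H2 ι : Type*} [NormedAddCommGroup H1] [InnerProductSpace ℝ H1]
  [NormedAddCommGroup H2] [InnerProductSpace ℝ H2]

@[simp]
lemma rankOne_apply (u : H1) (v : H2) (x : H1) : rankOne u v x = ⟪u, x⟫ • v := rfl

lemma perpProj_apply (u x : H1) : perpProj u x = x - ⟪u, x⟫ • u := rfl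

lemma perpProj_self {u : H1} (hu : ‖u‖ = 1) : perpProj u u = 0 := by
  simp [perpProj_apply, hu]

lemma inner_perpProj_self_right {v : H2} (hv : ‖v‖ = 1) (y : H2) : ⟪perpProj v y, v⟫ = 0 := by
  rw [perpProj_apply, inner_sub_left, real_inner_smul_left, real_inner_self_eq_norm_sq, hv,
    one_pow, mul_one, real_inner_comm, sub_self]

lemma hasSum_inner_rankOne (b : HilbertBasis ι ℝ H1) (A : H1 →L[ℝ] H2)
    (u : H1) (c : H2) : HasSum (fun i => ⟪A (b i), rankOne u c (b i)⟫) ⟪A u, c⟫ := by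
  have h := ((innerSL ℝ c).comp A).hasSum (b.hasSum_repr u)
  simp only [ContinuousLinearMap.coe_comp, Function.comp_apply, map_smul, innerSL_apply_apply,
    smul_eq_mul, b.repr_apply_apply, ← real_inner_comm c] at h
  refine h.congr_fun fun i => ?_
  rw [rankOne_apply, real_inner_smul_right, real_inner_comm (b i)]

lemma hsInner_rankOne_right (b : HilbertBasis ι ℝ H1) (A : H1 →L[ℝ] H2)
    (u : H1) (c : H2) : hsInner b A (rankOne u c) = ⟪A u, c⟫ :=
  (hasSum_inner_rankOne b A u c).tsum_eq

lemma hsInner_rankOne_add_rankOne_eq_zero (b : HilbertBasis ι ℝ H1)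
    {A : H1 →L[ℝ] H2} {u : H1} {v : H2} (hAu : A u = 0) (hAv : ∀ x, ⟪A x, v⟫ = 0)
    (a : H1) (c : H2) : hsInner b A (rankOne u c + rankOne a v) = 0 := by
  have hterm : ∀ i, ⟪A (b i), (rankOne u c + rankOne a v) (b i)⟫
      = ⟪A (b i), rankOne u c (b i)⟫ := by
    intro i
    simp [inner_add_right, real_inner_smul_right, hAv]
  rw [hsInner, tsum_congr hterm, ← hsInner, hsInner_rankOne_right, hAu, inner_zero_left]

lemma rankOne_sub_smul_left (w u : H1) (r : ℝ) (v : H2) :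
    rankOne (w - r • u) v = rankOne w v - r • rankOne u v := by
  ext x
  simp only [rankOne_apply, sub_apply, smul_apply, inner_sub_left, real_inner_smul_left,
    sub_smul, smul_smul]

variable [CompleteSpace H1] [CompleteSpace H2]

lemma sub_rankOne_eq_perpProj_comp (H : H1 →L[ℝ] H2) (u : H1) (v : H2) :
    H - (rankOne u (H u) + rankOne (ContinuousLinearMap.adjoint H v) v - ⟪H u, v⟫ • rankOne u v)
      = (perpProj v).comp (H.comp (perpProj u)) := by
  ext x
  simp only [sub_apply, add_apply, smul_apply, ContinuousLinearMap.coe_comp,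
    Function.comp_apply, rankOne_apply, perpProj_apply, map_sub, map_smul,
    ContinuousLinearMap.adjoint_inner_left, smul_sub, smul_smul, real_inner_comm v]
  rw [mul_comm ⟪u, x⟫]
  abel

end

theorem stmt4_general {H1 H2 ι : Type*}
    [NormedAddCommGroup H1] [InnerProductSpace ℝ H1] [CompleteSpace H1]
    [NormedAddCommGroup H2] [InnerProductSpace ℝ H2] [CompleteSpace H2]
    (u : H1) (v : H2) (hu : ‖u‖ = 1) (hv : ‖v‖ = 1)
    (H : H1 →L[ℝ] H2) (b : HilbertBasis ι ℝ H1)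
    (P : H1 →L[ℝ] H2)
    (hP : P = rankOne u (H u) + rankOne (ContinuousLinearMap.adjoint H v) v
            - ⟪H u, v⟫ • rankOne u v) :
    -- `P` is the orthogonal projection of `H` onto `T`: it belongs to `T` and `H - P ⊥ T`,
    (∃ (a : H1) (c : H2), P = rankOne u c + rankOne a v) ∧
    (∀ (a : H1) (c : H2), hsInner b (H - P) (rankOne u c + rankOne a v) = 0) ∧
    -- and the projection of `H` onto `T^⊥` is `P_{v^⊥} ∘ H ∘ P_{u^⊥}`:
    H - P = (perpProj v).comp (H.comp (perpProj u)) := by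
  have hQ : H - P = (perpProj v).comp (H.comp (perpProj u)) := by
    rw [hP, sub_rankOne_eq_perpProj_comp]
  refine ⟨⟨_, H u, by rw [hP, add_sub_assoc, rankOne_sub_smul_left]⟩, ?_, hQ⟩
  rw [hQ]
  exact hsInner_rankOne_add_rankOne_eq_zero b (by simp [perpProj_self hu])
    (fun x => inner_perpProj_self_right hv _)

theorem stmt4 {H1 H2 ι : Type*}
    [NormedAddCommGroup H1] [InnerProductSpace ℝ H1] [CompleteSpace H1]
    [TopologicalSpace.SeparableSpace H1]
    [NormedAddCommGroup H2] [InnerProductSpace ℝ H2] [CompleteSpace H2]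
    [TopologicalSpace.SeparableSpace H2]
    (u : H1) (v : H2) (hu : ‖u‖ = 1) (hv : ‖v‖ = 1)
    -- `H` is a Hilbert–Schmidt operator:
    (H : H1 →L[ℝ] H2) (b : HilbertBasis ι ℝ H1)
    (hHS : Summable fun i => ‖H (b i)‖ ^ 2)
    (P : H1 →L[ℝ] H2)
    (hP : P = rankOne u (H u) + rankOne (ContinuousLinearMap.adjoint H v) v
            - ⟪H u, v⟫ • rankOne u v) :
    -- `P` is the orthogonal projection of `H` onto `T`: it belongs to `T` and `H - P ⊥ T`,
    (∃ (a : H1) (c : H2), P = rankOne u c + rankOne a v) ∧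
    (∀ (a : H1) (c : H2), hsInner b (H - P) (rankOne u c + rankOne a v) = 0) ∧
    -- and the projection of `H` onto `T^⊥` is `P_{v^⊥} ∘ H ∘ P_{u^⊥}`:
    H - P = (perpProj v).comp (H.comp (perpProj u)) :=
  stmt4_general u v hu hv H b P hP
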